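/- arXiv:2605.10261 — 2 statements merged into one kernel-verified Lean document; each statement's English description precedes it below -/
import Mathlib

section
/- Combining the previous results: for binary labels with both classes nonempty, the SignalCAV vector equals exactly the difference of class means, v_sig = μ₁ − μ₀. -/
/-! Binary labels with class sizes `n₁, n₀` and `N = n₁ + n₀` have mean `t̄ = n₁ / N`. As the
centred labels sum to zero, the centring of `h` drops out of the covariance, and splitting by
class gives `Σ (t - t̄) (h - h̄) = (n₀ / N) Σ_{t=1} h - (n₁ / N) Σ_{t=0} h = (n₁ n₀ / N) (μ₁ - μ₀)`.
For `h = t` this reads `N σ_t² = n₁ n₀ / N`, which cancels the covariance factor exactly. -/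

open Finset
open scoped Classical

variable {m : ℕ} {ι : Type*} [Fintype ι]

/-- Empirical mean of activations. -/
noncomputable def hMean (h : ι → EuclideanSpace ℝ (Fin m)) : EuclideanSpace ℝ (Fin m) :=
  ((Fintype.card ι : ℝ))⁻¹ • ∑ i, h i

/-- Empirical mean of labels. -/
noncomputable def tMean (t : ι → ℝ) : ℝ :=
  ((Fintype.card ι : ℝ))⁻¹ * ∑ i, t i

/-- Empirical variance of labels. -/
noncomputable def tVar (t : ι → ℝ) : ℝ :=
  ((Fintype.card ι : ℝ))⁻¹ * ∑ i, (t i - tMean t) ^ 2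

/-- The SignalCAV vector `v = (1/(σ_t² |X|)) Σ (h - h̄)(t - t̄)`. -/
noncomputable def signalCAV (h : ι → EuclideanSpace ℝ (Fin m)) (t : ι → ℝ) :
    EuclideanSpace ℝ (Fin m) :=
  (tVar t * (Fintype.card ι : ℝ))⁻¹ • ∑ i, (t i - tMean t) • (h i - hMean h)

/-- Mean of activations over the samples with label `val`. -/
noncomputable def classMean (h : ι → EuclideanSpace ℝ (Fin m)) (t : ι → ℝ)
    (val : ℝ) : EuclideanSpace ℝ (Fin m) :=
  (((univ.filter fun i => t i = val).card : ℝ))⁻¹ •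
    ∑ i ∈ univ.filter (fun i => t i = val), h i

section Centring

variable {E : Type*} [AddCommGroup E] [Module ℝ E]

lemma sum_sub_tMean (t : ι → ℝ) : ∑ i, (t i - tMean t) = 0 := by
  rw [sum_sub_distrib, sum_const, card_univ, nsmul_eq_mul, tMean, ← mul_assoc]
  rcases eq_or_ne (Fintype.card ι : ℝ) 0 with hN | hN
  · simp [Fintype.card_eq_zero_iff.mp (by exact_mod_cast hN)]
  · rw [mul_inv_cancel₀ hN, one_mul, sub_self]

lemma sum_sub_tMean_smul_sub (t : ι → ℝ) (f : ι → E) (c : E) :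
    ∑ i, (t i - tMean t) • (f i - c) = ∑ i, (t i - tMean t) • f i := by
  rw [← sub_eq_zero, ← sum_sub_distrib]
  simp only [smul_sub, sub_sub_cancel_left, ← neg_smul, ← sum_smul, sum_neg_distrib, sum_sub_tMean,
    neg_zero, zero_smul]

end Centring

section BinaryLabels

variable {E : Type*} [AddCommGroup E] [Module ℝ E]
variable {t : ι → ℝ} (hbin : ∀ i, t i = 0 ∨ t i = 1)
include hbin

lemma filter_not_eq_one_of_binary :
    univ.filter (fun i => ¬ t i = 1) = univ.filter (fun i => t i = 0) :=
  filter_congr fun i _ => by rcases hbin i with h | h <;> simp [h]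

lemma sum_sub_smul_of_binary (a : ℝ) (f : ι → E) :
    ∑ i, (t i - a) • f i =
      (1 - a) • ∑ i ∈ univ.filter (fun i => t i = 1), f i
        - a • ∑ i ∈ univ.filter (fun i => t i = 0), f i := by
  rw [← sum_filter_add_sum_filter_not univ (fun i => t i = 1),
    filter_not_eq_one_of_binary hbin, smul_sum, smul_sum, sub_eq_add_neg, ← sum_neg_distrib]
  congr 1 <;> refine sum_congr rfl fun i hi => ?_
  · rw [(mem_filter.mp hi).2]
  · rw [(mem_filter.mp hi).2, zero_sub, neg_smul]

lemma card_eq_add_of_binary :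
    Fintype.card ι =
      (univ.filter fun i => t i = 1).card + (univ.filter fun i => t i = 0).card := by
  rw [← filter_not_eq_one_of_binary hbin, card_filter_add_card_filter_not, card_univ]

lemma tMean_of_binary :
    tMean t = (univ.filter fun i => t i = 1).card / Fintype.card ι := by
  have ht : ∀ i, t i = if t i = 1 then 1 else 0 := fun i => by
    rcases hbin i with h | h <;> simp [h]
  rw [tMean, sum_congr rfl fun i _ => ht i, sum_boole, inv_mul_eq_div]

lemma one_sub_tMean_of_binary [Nonempty ι] :
    1 - tMean t = (univ.filter fun i => t i = 0).card / Fintype.card ι := by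
  have hN : (Fintype.card ι : ℝ) ≠ 0 := Nat.cast_ne_zero.mpr Fintype.card_ne_zero
  rw [tMean_of_binary hbin]
  field_simp
  push_cast [card_eq_add_of_binary hbin]
  ring

lemma sum_sq_sub_tMean_of_binary [Nonempty ι] :
    ∑ i, (t i - tMean t) ^ 2 =
      (univ.filter fun i => t i = 1).card * (univ.filter fun i => t i = 0).card
        / Fintype.card ι := by
  have hS1 : ∑ i ∈ univ.filter (fun i => t i = 1), t i =
      (univ.filter fun i => t i = 1).card := by
    rw [sum_congr rfl fun i hi => (mem_filter.mp hi).2, sum_const, nsmul_one]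
  have hS0 : ∑ i ∈ univ.filter (fun i => t i = 0), t i = 0 :=
    sum_eq_zero fun i hi => (mem_filter.mp hi).2
  calc ∑ i, (t i - tMean t) ^ 2 = ∑ i, (t i - tMean t) • (t i - tMean t) := by
        simp only [sq, smul_eq_mul]
    _ = ∑ i, (t i - tMean t) • t i := sum_sub_tMean_smul_sub t t _
    _ = (1 - tMean t) * (univ.filter fun i => t i = 1).card := by
      rw [sum_sub_smul_of_binary hbin, hS1, hS0, smul_eq_mul, smul_zero, sub_zero]
    _ = _ := by
      rw [one_sub_tMean_of_binary hbin]
      ring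

end BinaryLabels

lemma card_smul_classMean (h : ι → EuclideanSpace ℝ (Fin m)) (t : ι → ℝ) (v : ℝ)
    (hne : (univ.filter fun i => t i = v).Nonempty) :
    ((univ.filter fun i => t i = v).card : ℝ) • classMean h t v =
      ∑ i ∈ univ.filter (fun i => t i = v), h i :=
  smul_inv_smul₀ (Nat.cast_ne_zero.mpr hne.card_pos.ne') _

lemma sum_smul_sub_hMean_of_binary (h : ι → EuclideanSpace ℝ (Fin m)) {t : ι → ℝ}
    (hbin : ∀ i, t i = 0 ∨ t i = 1)
    (h1 : (univ.filter fun i => t i = 1).Nonempty)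
    (h0 : (univ.filter fun i => t i = 0).Nonempty) :
    ∑ i, (t i - tMean t) • (h i - hMean h) =
      ((univ.filter fun i => t i = 1).card * (univ.filter fun i => t i = 0).card
        / Fintype.card ι : ℝ) • (classMean h t 1 - classMean h t 0) := by
  have : Nonempty ι := ⟨h1.choose⟩
  rw [sum_sub_tMean_smul_sub, sum_sub_smul_of_binary hbin, ← card_smul_classMean h t 1 h1,
    ← card_smul_classMean h t 0 h0, one_sub_tMean_of_binary hbin, tMean_of_binary hbin]
  module

/-- For binary labels with both classes nonempty, the SignalCAV vector equals
exactly the difference of class means: `v_sig = μ₁ - μ₀`. -/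
theorem stmt11 (h : ι → EuclideanSpace ℝ (Fin m)) (t : ι → ℝ)
    (hbin : ∀ i, t i = 0 ∨ t i = 1)
    (h1 : (univ.filter fun i => t i = 1).Nonempty)
    (h0 : (univ.filter fun i => t i = 0).Nonempty) :
    signalCAV h t = classMean h t 1 - classMean h t 0 := by
  have : Nonempty ι := ⟨h1.choose⟩
  have hN : (Fintype.card ι : ℝ) ≠ 0 := Nat.cast_ne_zero.mpr Fintype.card_ne_zero
  have hvar : tVar t * Fintype.card ι =
      (univ.filter fun i => t i = 1).card * (univ.filter fun i => t i = 0).card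
        / Fintype.card ι := by
    rw [tVar, mul_comm, mul_inv_cancel_left₀ hN, sum_sq_sub_tMean_of_binary hbin]
  have hn1 := h1.card_pos
  have hn0 := h0.card_pos
  rw [signalCAV, hvar, sum_smul_sub_hMean_of_binary h hbin h1 h0, inv_smul_smul₀ (by positivity)]
end

section
/- Let T₁, T₂ : C → [0,1] on finite nonempty C. The integrated agreement ∫₀¹ [(1/|C|) Σ_c (𝟙(T₁(c)>α)𝟙(T₂(c)>α) + (1−𝟙(T₁(c)>α))(1−𝟙(T₂(c)>α)))] dα equals (1/|C|) Σ_c (1 − |T₁(c) − T₂(c)|). -/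
/-!
Writing `x = 𝟙(α < a)` and `y = 𝟙(α < b)`, the agreement `x y + (1 - x)(1 - y)` equals
`1 - x - y + 2 𝟙(α < min a b)`. For a threshold `t ∈ [0, 1]` the step `𝟙(α < t)` integrates to `t`
over `[0, 1]`, so the agreement integrates to `1 - a - b + 2 min a b = 1 - |a - b|`; the average
over concepts then commutes with the integral by linearity.
-/

open MeasureTheory Set

lemma antitone_ite_gt (a : ℝ) : Antitone fun α : ℝ => if a > α then (1:ℝ) else 0 := by
  intro x y hxy
  dsimp only
  split_ifs <;> linarith

lemma intervalIntegrable_ite_gt (a u v : ℝ) :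
    IntervalIntegrable (fun α : ℝ => if a > α then (1:ℝ) else 0) volume u v :=
  (antitone_ite_gt a).intervalIntegrable

lemma ite_gt_mul_ite_gt (a b α : ℝ) :
    (if a > α then (1:ℝ) else 0) * (if b > α then (1:ℝ) else 0)
      = if min a b > α then (1:ℝ) else 0 := by
  by_cases ha : a > α <;> by_cases hb : b > α <;> simp [ha, hb]

lemma agreement_eq_ite_gt (a b α : ℝ) :
    (if a > α then (1:ℝ) else 0) * (if b > α then (1:ℝ) else 0)
        + (1 - if a > α then (1:ℝ) else 0) * (1 - if b > α then (1:ℝ) else 0)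
      = 1 - (if a > α then (1:ℝ) else 0) - (if b > α then (1:ℝ) else 0)
        + 2 * if min a b > α then (1:ℝ) else 0 := by
  rw [← ite_gt_mul_ite_gt]
  ring

lemma integral_ite_gt {a : ℝ} (ha : a ∈ Icc (0:ℝ) 1) :
    ∫ α in (0:ℝ)..1, (if a > α then (1:ℝ) else 0) = a := by
  have hind : (fun α : ℝ => if a > α then (1:ℝ) else 0) = (Iio a).indicator 1 := by
    ext α
    simp [indicator_apply]
  have hset : Iio a ∩ Ioc 0 1 = Ioo 0 a := by
    ext α
    simp only [mem_inter_iff, mem_Iio, mem_Ioc, mem_Ioo]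
    constructor
    · rintro ⟨hαa, hα₀, -⟩
      exact ⟨hα₀, hαa⟩
    · rintro ⟨hα₀, hαa⟩
      exact ⟨hαa, hα₀, by linarith [ha.2]⟩
  rw [intervalIntegral.integral_of_le zero_le_one, hind, integral_indicator_one measurableSet_Iio,
    measureReal_restrict_apply measurableSet_Iio, hset, Real.volume_real_Ioo_of_le ha.1, sub_zero]

lemma intervalIntegrable_agreement (a b u v : ℝ) :
    IntervalIntegrable (fun α : ℝ => (if a > α then (1:ℝ) else 0) * (if b > α then (1:ℝ) else 0)
        + (1 - if a > α then (1:ℝ) else 0) * (1 - if b > α then (1:ℝ) else 0)) volume u v := by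
  simp_rw [agreement_eq_ite_gt]
  exact ((intervalIntegrable_const.sub (intervalIntegrable_ite_gt a u v)).sub
    (intervalIntegrable_ite_gt b u v)).add ((intervalIntegrable_ite_gt (min a b) u v).const_mul 2)

lemma integral_agreement {a b : ℝ} (ha : a ∈ Icc (0:ℝ) 1) (hb : b ∈ Icc (0:ℝ) 1) :
    ∫ α in (0:ℝ)..1, ((if a > α then (1:ℝ) else 0) * (if b > α then (1:ℝ) else 0)
        + (1 - if a > α then (1:ℝ) else 0) * (1 - if b > α then (1:ℝ) else 0))
      = 1 - |a - b| := by
  have hmin : min a b ∈ Icc (0:ℝ) 1 := ⟨le_min ha.1 hb.1, (min_le_left a b).trans ha.2⟩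
  have hI (x : ℝ) := intervalIntegrable_ite_gt x 0 1
  simp_rw [agreement_eq_ite_gt]
  rw [intervalIntegral.integral_add ((intervalIntegrable_const.sub (hI a)).sub (hI b))
      ((hI _).const_mul 2),
    intervalIntegral.integral_sub (intervalIntegrable_const.sub (hI a)) (hI b),
    intervalIntegral.integral_sub intervalIntegrable_const (hI a), intervalIntegral.integral_const,
    intervalIntegral.integral_const_mul, integral_ite_gt ha, integral_ite_gt hb,
    integral_ite_gt hmin, smul_eq_mul]
  linarith [max_sub_min_eq_abs' a b, min_add_max a b]

theorem stmt17_general {C : Type*} [Fintype C] (T₁ T₂ : C → ℝ)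
    (h₁ : ∀ c, T₁ c ∈ Set.Icc (0:ℝ) 1) (h₂ : ∀ c, T₂ c ∈ Set.Icc (0:ℝ) 1) :
    ∫ α in (0:ℝ)..1,
        (1 / (Fintype.card C : ℝ)) * ∑ c,
          ((if T₁ c > α then (1:ℝ) else 0) * (if T₂ c > α then (1:ℝ) else 0)
            + (1 - if T₁ c > α then (1:ℝ) else 0)
              * (1 - if T₂ c > α then (1:ℝ) else 0))
      = (1 / (Fintype.card C : ℝ)) * ∑ c, (1 - |T₁ c - T₂ c|) := by
  rw [intervalIntegral.integral_const_mul,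
    intervalIntegral.integral_finsetSum fun c _ => intervalIntegrable_agreement _ _ _ _]
  congr 1
  exact Finset.sum_congr rfl fun c _ => integral_agreement (h₁ c) (h₂ c)

/-- Averaging the thresholded agreement over concepts and integrating over all
thresholds yields the closed-form agreement score
`(1/|C|) Σ_c (1 - |T₁ c - T₂ c|)`. -/
theorem stmt17 {C : Type*} [Fintype C] [Nonempty C] (T₁ T₂ : C → ℝ)
    (h₁ : ∀ c, T₁ c ∈ Set.Icc (0:ℝ) 1) (h₂ : ∀ c, T₂ c ∈ Set.Icc (0:ℝ) 1) :
    ∫ α in (0:ℝ)..1,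
        (1 / (Fintype.card C : ℝ)) * ∑ c,
          ((if T₁ c > α then (1:ℝ) else 0) * (if T₂ c > α then (1:ℝ) else 0)
            + (1 - if T₁ c > α then (1:ℝ) else 0)
              * (1 - if T₂ c > α then (1:ℝ) else 0))
      = (1 / (Fintype.card C : ℝ)) * ∑ c, (1 - |T₁ c - T₂ c|) :=
  stmt17_general T₁ T₂ h₁ h₂
end
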